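/- arXiv:2510.07405 — 4 statements merged into one kernel-verified Lean document; each statement's English description precedes it below -/
import Mathlib

section
/- Let A be an Iwanaga-Gorenstein algebra of Gorenstein dimension at most 1, i a vertex, and J = A e_i A. Then Ext^1_A(J, J) = 0. -/
noncomputable section

open CategoryTheory Opposite DirectSum MulOpposite

/-- An idempotent is primitive if it is nonzero and is not the sum of two nonzero
orthogonal idempotents. -/
def IsPrimitiveIdempotent {A : Type} [Ring A] (a : A) : Prop :=
  IsIdempotentElem a ∧ a ≠ 0 ∧
    ∀ b c : A, IsIdempotentElem b → IsIdempotentElem c → b * c = 0 → c * b = 0 →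
      a = b + c → b = 0 ∨ c = 0

/-- A complete family of orthogonal idempotents. -/
def CompOrthIdem {A ι : Type} [Ring A] [Fintype ι] (e : ι → A) : Prop :=
  (∀ i j, i ≠ j → e i * e j = 0) ∧ (∀ i, IsIdempotentElem (e i)) ∧ (∑ i, e i) = 1

/-- The two-sided ideal `A e A` generated by an idempotent `e`, viewed as a
right `A`-module (i.e. a module over `Aᵐᵒᵖ`): it is the right `A`-submodule of `A`
spanned by all elements `b * e`. -/
def genIdeal {A : Type} [Ring A] (e : A) : Submodule Aᵐᵒᵖ A :=
  Submodule.span Aᵐᵒᵖ {x | ∃ b : A, x = b * e}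

/-- The indecomposable projective right module `e A` at the idempotent `e`. -/
def pIdeal {A : Type} [Ring A] (e : A) : Submodule Aᵐᵒᵖ A :=
  Submodule.span Aᵐᵒᵖ ({e} : Set A)

/-- The radical of a module: the intersection of all maximal submodules.
For a finite dimensional module `M` over a finite dimensional algebra this is `M · rad A`. -/
def radical (R M : Type) [Ring R] [AddCommGroup M] [Module R M] : Submodule R M :=
  sInf {m | IsCoatom m}

/-- `Ext¹` for right `A`-modules, as a `k`-module. -/
abbrev rext1 (k : Type) [Field k] (A : Type) [Ring A] [Algebra k A]
    (M N : ModuleCat.{0} Aᵐᵒᵖ) : ModuleCat.{0} k :=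
  ((Ext k (ModuleCat.{0} Aᵐᵒᵖ) 1).obj (op M)).obj N

/-- A right `A`-module `M` is Cohen-Macaulay if `Ext¹_A(M, A) = 0`. -/
def IsCM (k : Type) [Field k] (A : Type) [Ring A] [Algebra k A]
    (M : ModuleCat.{0} Aᵐᵒᵖ) : Prop :=
  Subsingleton (rext1 k A M (ModuleCat.of Aᵐᵒᵖ A))

/-- A module has injective dimension at most 1: it admits an injective
coresolution `0 → M → I₀ → I₁ → 0`. -/
def InjDimLE1 (R : Type) [Ring R] (M : ModuleCat.{0} R) : Prop :=
  ∃ (I₀ I₁ : ModuleCat.{0} R) (f : M →ₗ[R] I₀) (g : I₀ →ₗ[R] I₁),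
    Module.Injective R I₀ ∧ Module.Injective R I₁ ∧
    Function.Injective f ∧ Function.Surjective g ∧ Function.Exact f g

/-- A module has projective dimension at most 1: it admits a projective
resolution `0 → P₁ → P₀ → M → 0`. -/
def ProjDimLE1 (R : Type) [Ring R] (M : ModuleCat.{0} R) : Prop :=
  ∃ (P₀ P₁ : ModuleCat.{0} R) (g : P₀ →ₗ[R] M) (f : P₁ →ₗ[R] P₀),
    Module.Projective R P₀ ∧ Module.Projective R P₁ ∧
    Function.Surjective g ∧ Function.Injective f ∧ Function.Exact f g

/-- `R` is Iwanaga-Gorenstein of Gorenstein dimension at most 1: every projective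
module has injective dimension at most 1 and every injective module has projective
dimension at most 1. -/
def IwanagaGorenstein1 (R : Type) [Ring R] : Prop :=
  (∀ P : ModuleCat.{0} R, Module.Projective R P → InjDimLE1 R P) ∧
  (∀ I : ModuleCat.{0} R, Module.Injective R I → ProjDimLE1 R I)

/-! `A` is a projective right module of injective dimension at most one, so `Ext¹(N, A) = 0`
for every submodule `N ⊆ A` (the obstruction would live in `Ext²(A/N, A)`). Hence a map from
the syzygy of `J = A e A` to `J` extends to the projective cover, at first only as a map to `A`;
composed with `A → A/J` it factors through `Hom(J, A/J)`, which vanishes because `J` is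
generated by elements fixed by right multiplication with `e` while `(A/J) e = 0`. So the
extension lands in `J`, and `Ext¹(J, J) = 0`. -/

namespace LinearMap

/-- Every map `ker π → N` extends along `ker π ↪ P`. For a surjection `π : P → M` from a
projective module this says `Ext¹(M, N) = 0`. -/
def ExtendsFromKer {R P M : Type*} [Ring R] [AddCommGroup P] [Module R P] [AddCommGroup M]
    [Module R M] (π : P →ₗ[R] M) (N : Type*) [AddCommGroup N] [Module R N] : Prop :=
  ∀ φ : ker π →ₗ[R] N, ∃ ψ : P →ₗ[R] N, ψ ∘ₗ (ker π).subtype = φ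

variable {R M N T : Type*} [Ring R] [AddCommGroup M] [Module R M] [AddCommGroup N] [Module R N]
  [AddCommGroup T] [Module R T]

theorem exists_comp_eq_of_surjective_of_ker_le {π : M →ₗ[R] N} (hπ : Function.Surjective π)
    {t : M →ₗ[R] T} (h : ker π ≤ ker t) : ∃ u : N →ₗ[R] T, u ∘ₗ π = t :=
  ⟨(ker π).liftQ t h ∘ₗ (π.quotKerEquivOfSurjective hπ).symm.toLinearMap, by
    ext x
    simp [quotKerEquivOfSurjective_symm_apply]⟩

theorem exists_comp_eq_of_exact {ι : N →ₗ[R] M} {g : M →ₗ[R] T} (hι : Function.Injective ι)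
    (hex : Function.Exact ι g) {P : Type*} [AddCommGroup P] [Module R P] {β : P →ₗ[R] M}
    (hβ : g ∘ₗ β = 0) : ∃ ψ : P →ₗ[R] N, ι ∘ₗ ψ = β := by
  have hrange (x : P) : β x ∈ range ι := hex.linearMap_ker_eq ▸ mem_ker.2 congr($hβ x)
  refine ⟨(LinearEquiv.ofInjective ι hι).symm.toLinearMap ∘ₗ β.codRestrict _ hrange, ?_⟩
  ext x
  exact LinearEquiv.ofInjective_symm_apply ι (h := hι) ⟨β x, hrange x⟩

end LinearMap

open LinearMap

section ExtOne

variable {R : Type} [Ring R]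

theorem extendsFromKer_of_injDimLE1 {Q : Type} [AddCommGroup Q] [Module R Q]
    [Module.Projective R Q] (hQ : InjDimLE1 R (ModuleCat.of R Q)) (N : Submodule R Q)
    {P : Type*} [AddCommGroup P] [Module R P] {π : P →ₗ[R] N} (hπ : Function.Surjective π) :
    π.ExtendsFromKer Q := by
  intro φ
  obtain ⟨I₀, I₁, ι, g, hI₀, hI₁, hι, hg, hex⟩ := hQ
  -- Extend `ι ∘ φ` to `α : P → I₀`, then correct `α` so that it lands in `ι(Q)`: the induced
  -- map `N → I₁` extends to `Q` and lifts along `g` because `Q` is projective.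
  obtain ⟨α, hα⟩ := Module.Injective.extension_property R I₀ _ _
    (ker π).subtype (ker π).injective_subtype (ι ∘ₗ φ)
  obtain ⟨u, hu⟩ := exists_comp_eq_of_surjective_of_ker_le hπ (t := g ∘ₗ α) fun x hx ↦ by
    simpa using congr(g ($hα ⟨x, hx⟩)).trans (hex.apply_apply_eq_zero _)
  obtain ⟨v, hv⟩ := Module.Injective.extension_property R I₁ _ _ N.subtype N.injective_subtype u
  obtain ⟨w, hw⟩ := Module.projective_lifting_property g v hg
  obtain ⟨ψ, hψ⟩ := exists_comp_eq_of_exact hι hex (β := α - w ∘ₗ N.subtype ∘ₗ π) (by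
    rw [comp_sub, ← hu, ← comp_assoc, hw, ← comp_assoc, hv, sub_self])
  refine ⟨ψ, ext fun x ↦ hι ?_⟩
  have hπx : π x = 0 := x.2
  calc ι (ψ x) = α x - w (π x) := congr($hψ x)
    _ = ι (φ x) := by simpa [hπx] using congr($hα x)

theorem extendsFromKer_of_hom_quotient_eq_zero {Q : Type*} [AddCommGroup Q] [Module R Q]
    {J : Submodule R Q} (hJ : ∀ h : J →ₗ[R] Q ⧸ J, h = 0) {P : Type*} [AddCommGroup P]
    [Module R P] {π : P →ₗ[R] J} (hπ : Function.Surjective π) (hext : π.ExtendsFromKer Q) :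
    π.ExtendsFromKer J := by
  intro φ
  obtain ⟨ψ, hψ⟩ := hext (J.subtype ∘ₗ φ)
  obtain ⟨h, hh⟩ := exists_comp_eq_of_surjective_of_ker_le hπ (t := J.mkQ ∘ₗ ψ) fun x hx ↦ by
    have hψx : ψ x = φ ⟨x, hx⟩ := congr($hψ ⟨x, hx⟩)
    simp [hψx]
  have hmem (x : P) : ψ x ∈ J := by
    simpa [hJ h] using congr($hh x).symm
  exact ⟨ψ.codRestrict J hmem, ext fun x ↦ Subtype.ext congr($hψ x)⟩

theorem exists_comp_eq_of_extendsFromKer {X₂ X₁ X₀ M N : Type*} [AddCommGroup X₂]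
    [Module R X₂] [AddCommGroup X₁] [Module R X₁] [AddCommGroup X₀] [Module R X₀]
    [AddCommGroup M] [Module R M] [AddCommGroup N] [Module R N] {d₂ : X₂ →ₗ[R] X₁}
    {d₁ : X₁ →ₗ[R] X₀} {π : X₀ →ₗ[R] M} (h₁ : Function.Exact d₂ d₁) (h₀ : Function.Exact d₁ π)
    (hext : π.ExtendsFromKer N) {f : X₁ →ₗ[R] N} (hf : f ∘ₗ d₂ = 0) :
    ∃ ψ : X₀ →ₗ[R] N, ψ ∘ₗ d₁ = f := by
  let ρ : X₁ →ₗ[R] ker π := d₁.codRestrict (ker π) h₀.apply_apply_eq_zero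
  have hρ : Function.Surjective ρ := fun ⟨x, hx⟩ ↦
    (h₀ x).1 hx |>.imp fun y hy ↦ Subtype.ext hy
  obtain ⟨φ, hφ⟩ := exists_comp_eq_of_surjective_of_ker_le hρ (t := f) fun x hx ↦ by
    obtain ⟨z, rfl⟩ := (h₁ x).1 congr(Subtype.val $hx)
    exact congr($hf z)
  obtain ⟨ψ, hψ⟩ := hext φ
  exact ⟨ψ, by rw [← hφ, ← hψ]; rfl⟩

theorem ext_one_subsingleton_of_extendsFromKer {k : Type} [Field k] [Algebra k R]
    {M N : ModuleCat.{0} R}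
    (hext : ∀ (P : ModuleCat.{0} R) (π : P →ₗ[R] M), Function.Surjective π → π.ExtendsFromKer N) :
    Subsingleton (((Ext k (ModuleCat.{0} R) 1).obj (op M)).obj N) := by
  obtain ⟨P⟩ : Nonempty (ProjectiveResolution M) := HasProjectiveResolution.out
  refine ModuleCat.subsingleton_of_isZero (.of_iso ?_ (P.isoExt 1 N))
  rw [← HomologicalComplex.exactAt_iff_isZero_homology,
    HomologicalComplex.exactAt_iff' _ 0 1 2 (by simp) (by simp),
    ShortComplex.moduleCat_exact_iff]
  intro f hf
  have hf' : f.hom ∘ₗ (P.complex.d 2 1).hom = 0 := congr(ModuleCat.Hom.hom $hf)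
  have h₁ := (ShortComplex.ShortExact.moduleCat_exact_iff_function_exact _).1 (P.exact_succ 0)
  have h₀ := (ShortComplex.ShortExact.moduleCat_exact_iff_function_exact _).1 P.exact₀
  have hπ := (ModuleCat.epi_iff_surjective (P.π.f 0)).1 inferInstance
  obtain ⟨ψ, hψ⟩ := exists_comp_eq_of_extendsFromKer h₁ h₀ (hext _ _ hπ) hf'
  exact ⟨ModuleCat.ofHom ψ, ModuleCat.hom_ext hψ⟩

end ExtOne

theorem genIdeal_hom_quotient_eq_zero {A : Type} [Ring A] {e : A} (he : IsIdempotentElem e)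
    (h : genIdeal e →ₗ[Aᵐᵒᵖ] A ⧸ genIdeal e) : h = 0 := by
  refine ext_on Submodule.span_span_coe_preimage fun x ⟨b, hb⟩ ↦ ?_
  have hx : x = MulOpposite.op e • x := Subtype.ext <| by
    change (x : A) = x * e
    rw [hb, mul_assoc, he]
  obtain ⟨y, hy⟩ := Submodule.mkQ_surjective _ (h x)
  rw [hx, map_smul, ← hy, ← map_smul, LinearMap.zero_apply, Submodule.mkQ_apply,
    Submodule.Quotient.mk_eq_zero]
  exact Submodule.subset_span ⟨y, rfl⟩

theorem ext1_genIdeal_genIdeal_general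
    (k A ι : Type) [Field k] [Ring A] [Algebra k A]
    [Fintype ι] (e : ι → A) (hco : CompOrthIdem e)
    (hIG : IwanagaGorenstein1 Aᵐᵒᵖ) (i : ι) :
    Subsingleton (rext1 k A (ModuleCat.of Aᵐᵒᵖ ↥(genIdeal (e i)))
      (ModuleCat.of Aᵐᵒᵖ ↥(genIdeal (e i)))) := by
  have hA : Module.Projective Aᵐᵒᵖ A := .of_equiv (MulOpposite.opLinearEquiv Aᵐᵒᵖ).symm
  refine ext_one_subsingleton_of_extendsFromKer fun P π hπ ↦
    extendsFromKer_of_hom_quotient_eq_zero (genIdeal_hom_quotient_eq_zero (hco.2.1 i)) hπ ?_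
  exact extendsFromKer_of_injDimLE1 (hIG.1 _ hA) _ hπ

/-- Let `A` be an Iwanaga-Gorenstein algebra of Gorenstein dimension at
most 1 (for right modules), `i` a vertex with primitive idempotent `e i`, and
`J = A e_i A`. Then `Ext¹_A(J, J) = 0`. -/
theorem ext1_genIdeal_genIdeal
    (k A ι : Type) [Field k] [IsAlgClosed k] [Ring A] [Algebra k A] [FiniteDimensional k A]
    [Fintype ι] (e : ι → A) (hco : CompOrthIdem e)
    (hprim : ∀ j, IsPrimitiveIdempotent (e j))
    (hIG : IwanagaGorenstein1 Aᵐᵒᵖ) (i : ι) :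
    Subsingleton (rext1 k A (ModuleCat.of Aᵐᵒᵖ ↥(genIdeal (e i)))
      (ModuleCat.of Aᵐᵒᵖ ↥(genIdeal (e i)))) :=
  ext1_genIdeal_genIdeal_general k A ι e hco hIG i
end
end

section
/- Let A be an Iwanaga-Gorenstein algebra of Gorenstein dimension at most 1. Suppose L and N are Cohen-Macaulay A-modules each admitting a short exact sequence 0 → Y → P → X → 0 with Y Cohen-Macaulay containing the module as a direct summand, P projective, and X supported only on a fixed set I of vertices. Then every extension M of N by L (i.e., every middle term of a short exact sequence 0 → L → M → N → 0) admits a short exact sequence of the same form: 0 → Y_M → P_L ⊕ P_N → X_M → 0 with Y_M Cohen-Macaulay containing M as a summand and X_M supported only on vertices of I. -/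
noncomputable section

open CategoryTheory Opposite DirectSum MulOpposite

/-!
Pulling the extension `0 → L → M → N → 0` back along the retraction `Y_N → N` and pushing it
out along the section `L → Y_L` gives an extension `0 → Y_L → Y_M → Y_N → 0` of which `M` is a
direct summand; `Y_M` is Cohen-Macaulay because `Ext¹(-, A) = 0` is closed under extensions.
Since `Y_N` embeds in a projective module and `P_L` has injective dimension at most 1,
`Ext¹(Y_N, P_L) = 0`, so `Y_L → P_L` extends to `Y_M → P_L`; together with `Y_M → Y_N → P_N`
this embeds `Y_M` into `P_L ⊕ P_N`. The cokernel is an extension of `X_N` by `X_L`, so every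
`e_j` with `j ∉ I` kills it, being idempotent.
-/

open Function LinearMap

theorem LinearMap.exists_comp_eq_of_surjective {R M N P : Type*} [Ring R] [AddCommGroup M]
    [Module R M] [AddCommGroup N] [Module R N] [AddCommGroup P] [Module R P]
    {g : M →ₗ[R] N} (hg : Surjective g) {f : M →ₗ[R] P} (h : ker g ≤ ker f) :
    ∃ f' : N →ₗ[R] P, f' ∘ₗ g = f := by
  refine ⟨(ker g).liftQ f h ∘ₗ (g.quotKerEquivOfSurjective hg).symm.toLinearMap, ?_⟩
  ext x
  have : (g.quotKerEquivOfSurjective hg).symm (g x) = Submodule.Quotient.mk x := by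
    rw [LinearEquiv.symm_apply_eq, quotKerEquivOfSurjective_apply_mk]
  simp [this]

/-- `Ext¹(X, W) = 0`, in the form: for every short exact sequence `0 → Y → E → X → 0`, every
map `Y → W` extends to `E`. -/
def ExtOneVanishes (R : Type) [Ring R] (X W : Type) [AddCommGroup X] [Module R X]
    [AddCommGroup W] [Module R W] : Prop :=
  ∀ (Y E : Type) [AddCommGroup Y] [Module R Y] [AddCommGroup E] [Module R E]
    (i : Y →ₗ[R] E) (p : E →ₗ[R] X), Injective i → Surjective p → Exact i p →
    ∀ φ : Y →ₗ[R] W, ∃ ψ : E →ₗ[R] W, ψ ∘ₗ i = φ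

section ExtOne

variable {R : Type} [Ring R] {X X₁ X₂ X₃ W P₀ P₁ P₂ : Type} [AddCommGroup X] [Module R X]
  [AddCommGroup X₁] [Module R X₁] [AddCommGroup X₂] [Module R X₂] [AddCommGroup X₃] [Module R X₃]
  [AddCommGroup W] [Module R W] [AddCommGroup P₀] [Module R P₀] [AddCommGroup P₁] [Module R P₁]
  [AddCommGroup P₂] [Module R P₂]

theorem ExtOneVanishes.of_exact {i₁ : X₁ →ₗ[R] X₂} {p₁ : X₂ →ₗ[R] X₃} (hi₁ : Injective i₁)
    (hp₁ : Surjective p₁) (hex : Exact i₁ p₁) (h₁ : ExtOneVanishes R X₁ W)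
    (h₃ : ExtOneVanishes R X₃ W) : ExtOneVanishes R X₂ W := by
  intro Y E _ _ _ _ i p hi hp hip φ
  -- Extend `φ` first to `E₁ = p⁻¹(X₁)`, then from `E₁` to `E`, using `E / E₁ ≅ X₃`.
  let E₁ := (range i₁).comap p
  have hiE₁ : ∀ y, i y ∈ E₁ := fun y => by
    simp [E₁, hip.apply_apply_eq_zero]
  let p' : E₁ →ₗ[R] X₁ := (p ∘ₗ E₁.subtype).codLift i₁ hi₁ fun z => z.2
  have hp' : ∀ z, i₁ (p' z) = p z := fun z =>
    LinearMap.congr_fun (comp_codLift _ i₁ hi₁ _) z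
  have hp'_surj : Surjective p' := by
    intro x
    obtain ⟨e, he⟩ := hp (i₁ x)
    have he₁ : e ∈ E₁ := ⟨x, he.symm⟩
    exact ⟨⟨e, he₁⟩, hi₁ (by rw [hp']; exact he)⟩
  have hexact' : Exact (i.codRestrict E₁ hiE₁) p' := by
    intro z
    rw [← hi₁.eq_iff, hp', map_zero, hip]
    exact ⟨fun ⟨y, hy⟩ => ⟨y, Subtype.ext hy⟩, fun ⟨y, hy⟩ => ⟨y, congr($hy.1)⟩⟩
  obtain ⟨ψ₁, hψ₁⟩ :=
    h₁ Y E₁ _ p' (fun a b hab => hi (congrArg Subtype.val hab)) hp'_surj hexact' φ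
  have hexE₁ : Exact E₁.subtype (p₁ ∘ₗ p) := by
    intro e
    simp [E₁, ← hex.linearMap_ker_eq]
  obtain ⟨ψ, hψ⟩ := h₃ E₁ E E₁.subtype (p₁ ∘ₗ p) E₁.injective_subtype (hp₁.comp hp) hexE₁ ψ₁
  exact ⟨ψ, by rw [← hψ₁, ← hψ]; rfl⟩

theorem extOneVanishes_of_injDimLE1 {Q : ModuleCat.{0} R} (hQ : InjDimLE1 R Q) {Y : Type}
    [AddCommGroup Y] [Module R Y] [Module.Projective R P₀] {f : Y →ₗ[R] P₀} (hf : Injective f) :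
    ExtOneVanishes R Y Q := by
  obtain ⟨I₀, I₁, j, q, hI₀, hI₁, hj, hq, hjq⟩ := hQ
  intro Z E _ _ _ _ i p hi hp hip φ
  obtain ⟨α, hα⟩ := hI₀.out i hi (j ∘ₗ φ)
  obtain ⟨θ, hθ⟩ : ∃ θ : Y →ₗ[R] I₁, θ ∘ₗ p = q ∘ₗ α := by
    refine exists_comp_eq_of_surjective hp fun x hx => ?_
    obtain ⟨z, rfl⟩ := (hip x).mp hx
    simp [hα, hjq.apply_apply_eq_zero]
  -- `θ` lifts to `I₀` because it extends over the projective module `P₀`.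
  obtain ⟨Θ, hΘ⟩ := hI₁.out f hf θ
  obtain ⟨μ, hμ⟩ := Module.projective_lifting_property q Θ hq
  have hrange : ∀ x, (α - μ ∘ₗ f ∘ₗ p) x ∈ Set.range j := fun x => by
    refine (hjq _).mp ?_
    have hμx : q (μ (f (p x))) = θ (p x) := by rw [← hΘ, ← hμ]; rfl
    simp [hμx, ← LinearMap.comp_apply θ p, hθ]
  refine ⟨(α - μ ∘ₗ f ∘ₗ p).codLift j hj hrange, ?_⟩
  ext z
  apply hj
  rw [LinearMap.comp_apply, ← LinearMap.comp_apply j, comp_codLift]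
  simp [hα, hip.apply_apply_eq_zero]

section Presentation

variable {d₂ : P₂ →ₗ[R] P₁} {d₁ : P₁ →ₗ[R] P₀} {π : P₀ →ₗ[R] X}

theorem ExtOneVanishes.exists_comp_eq_of_comp_eq_zero (h : ExtOneVanishes R X W)
    (hπ : Surjective π) (hd₁π : Exact d₁ π) (hd₂d₁ : Exact d₂ d₁) {φ : P₁ →ₗ[R] W}
    (hφ : φ ∘ₗ d₂ = 0) : ∃ ψ : P₀ →ₗ[R] W, ψ ∘ₗ d₁ = φ := by
  let d₁' : P₁ →ₗ[R] ker π := d₁.codRestrict (ker π) fun x => hd₁π.apply_apply_eq_zero x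
  have hd₁' : Surjective d₁' := fun ⟨x, hx⟩ => by
    obtain ⟨y, rfl⟩ := (hd₁π x).mp hx
    exact ⟨y, rfl⟩
  obtain ⟨φ', hφ'⟩ : ∃ φ' : ker π →ₗ[R] W, φ' ∘ₗ d₁' = φ := by
    refine exists_comp_eq_of_surjective hd₁' fun x hx => ?_
    obtain ⟨y, rfl⟩ := (hd₂d₁ x).mp (congrArg Subtype.val hx)
    exact LinearMap.congr_fun hφ y
  obtain ⟨ψ, hψ⟩ := h (ker π) P₀ (ker π).subtype π (ker π).injective_subtype hπ
    (exact_subtype_ker_map π) φ'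
  exact ⟨ψ, by rw [← hφ', ← hψ]; rfl⟩

theorem extOneVanishes_of_forall_exists_comp_eq [Module.Projective R P₀] (hπ : Surjective π)
    (hd₁π : Exact d₁ π) (hd₂d₁ : d₁ ∘ₗ d₂ = 0)
    (h : ∀ φ : P₁ →ₗ[R] W, φ ∘ₗ d₂ = 0 → ∃ ψ : P₀ →ₗ[R] W, ψ ∘ₗ d₁ = φ) :
    ExtOneVanishes R X W := by
  intro Y E _ _ _ _ i p hi hp hip φ
  obtain ⟨s, hs⟩ := Module.projective_lifting_property p π hp
  have hrange : ∀ x, s (d₁ x) ∈ Set.range i := fun x => by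
    refine (hip _).mp ?_
    rw [← LinearMap.comp_apply p s, hs, hd₁π.apply_apply_eq_zero]
  let κ := (s ∘ₗ d₁).codLift i hi hrange
  have hκ : i ∘ₗ κ = s ∘ₗ d₁ := comp_codLift _ i hi hrange
  obtain ⟨ψ₀, hψ₀⟩ := h (φ ∘ₗ κ) <| by
    ext z
    have hκd₂ : κ (d₂ z) = 0 := hi <| by
      rw [map_zero, ← LinearMap.comp_apply i κ, hκ, LinearMap.comp_apply,
        ← LinearMap.comp_apply d₁ d₂, hd₂d₁, LinearMap.zero_apply, map_zero]
    simp [hκd₂]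
  -- `E` is the pushout of `d₁` along `κ`, so `φ` and `ψ₀` glue to a map on `E`.
  have hsurj : Surjective (i.coprod s) := fun e => by
    obtain ⟨x, hx⟩ := hπ (p e)
    obtain ⟨y, hy⟩ := (hip (e - s x)).mp (by
      rw [map_sub, ← LinearMap.comp_apply p s, hs, hx, sub_self])
    exact ⟨(y, x), by simp [hy]⟩
  have hker : ker (i.coprod s) ≤ ker (φ.coprod ψ₀) := by
    rintro ⟨y, x⟩ hyx
    replace hyx : i y + s x = 0 := hyx
    have hπx : π x = 0 := by
      rw [← hs, LinearMap.comp_apply, ← neg_eq_of_add_eq_zero_right hyx, map_neg,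
        hip.apply_apply_eq_zero, neg_zero]
    obtain ⟨z, rfl⟩ := (hd₁π x).mp hπx
    have hy : y = -κ z := hi <| by
      rw [map_neg, ← LinearMap.comp_apply i κ, hκ, LinearMap.comp_apply,
        eq_neg_of_add_eq_zero_left hyx]
    show φ y + ψ₀ (d₁ z) = 0
    rw [hy, ← LinearMap.comp_apply ψ₀ d₁, hψ₀, map_neg, LinearMap.comp_apply, neg_add_cancel]
  obtain ⟨ψ, hψ⟩ := exists_comp_eq_of_surjective hsurj hker
  refine ⟨ψ, ?_⟩
  ext y
  simpa using LinearMap.congr_fun hψ (y, 0)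

end Presentation

end ExtOne

section ExtComparison

variable {k R : Type} [Field k] [Ring R] [Algebra k R] {X W : ModuleCat.{0} R}

theorem subsingleton_ext_one_iff (P : ProjectiveResolution X) :
    Subsingleton (((Ext k (ModuleCat.{0} R) 1).obj (op X)).obj W) ↔
      ∀ φ : P.complex.X 1 →ₗ[R] W, φ ∘ₗ (P.complex.d 2 1).hom = 0 →
        ∃ ψ : P.complex.X 0 →ₗ[R] W, ψ ∘ₗ (P.complex.d 1 0).hom = φ := by
  rw [← ModuleCat.isZero_iff_subsingleton, (P.isoExt 1 W).isZero_iff,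
    ← HomologicalComplex.exactAt_iff_isZero_homology,
    HomologicalComplex.exactAt_iff' _ 0 1 2 (by simp) (by simp), ShortComplex.moduleCat_exact_iff]
  constructor
  · intro h φ hφ
    obtain ⟨ψ, hψ⟩ := h (ModuleCat.ofHom φ)
      (show P.complex.d 2 1 ≫ ModuleCat.ofHom φ = 0 by ext x; exact LinearMap.congr_fun hφ x)
    exact ⟨ψ.hom, congrArg ModuleCat.Hom.hom (hψ : P.complex.d 1 0 ≫ ψ = _)⟩
  · intro h φ hφ
    obtain ⟨ψ, hψ⟩ := h φ.hom (congrArg ModuleCat.Hom.hom (hφ : P.complex.d 2 1 ≫ φ = 0))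
    exact ⟨ModuleCat.ofHom ψ,
      show P.complex.d 1 0 ≫ _ = φ by ext x; exact LinearMap.congr_fun hψ x⟩

theorem subsingleton_ext_one_iff_extOneVanishes :
    Subsingleton (((Ext k (ModuleCat.{0} R) 1).obj (op X)).obj W) ↔ ExtOneVanishes R X W := by
  let P := ProjectiveResolution.of X
  have hπ : Surjective (P.π.f 0).hom := (ModuleCat.epi_iff_surjective _).mp inferInstance
  have hd₁π : Exact (P.complex.d 1 0).hom (P.π.f 0).hom :=
    (ShortComplex.ShortExact.moduleCat_exact_iff_function_exact _).mp P.exact₀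
  have hd₂d₁ : Exact (P.complex.d 2 1).hom (P.complex.d 1 0).hom :=
    (ShortComplex.ShortExact.moduleCat_exact_iff_function_exact _).mp (P.exact_succ 0)
  have : Module.Projective R (P.complex.X 0) :=
    (IsProjective.iff_projective _).mpr (inferInstanceAs (Projective (P.complex.X 0)))
  rw [subsingleton_ext_one_iff P]
  exact ⟨extOneVanishes_of_forall_exists_comp_eq hπ hd₁π hd₂d₁.linearMap_comp_eq_zero,
    fun h _ => h.exists_comp_eq_of_comp_eq_zero hπ hd₁π hd₂d₁⟩

end ExtComparison

theorem isCM_iff_extOneVanishes {k A : Type} [Field k] [Ring A] [Algebra k A]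
    {X : ModuleCat.{0} Aᵐᵒᵖ} :
    IsCM k A X ↔ ExtOneVanishes Aᵐᵒᵖ X A :=
  subsingleton_ext_one_iff_extOneVanishes

def IsRetract (R M Y : Type) [Ring R] [AddCommGroup M] [Module R M] [AddCommGroup Y]
    [Module R Y] : Prop :=
  ∃ (s : M →ₗ[R] Y) (r : Y →ₗ[R] M), r ∘ₗ s = LinearMap.id

section Retract

variable {R : Type} [Ring R] {L M N E Y Y' : Type} [AddCommGroup L] [Module R L]
  [AddCommGroup M] [Module R M] [AddCommGroup N] [Module R N] [AddCommGroup E] [Module R E]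
  [AddCommGroup Y] [Module R Y] [AddCommGroup Y'] [Module R Y']

theorem IsRetract.trans (h₁ : IsRetract R M E) (h₂ : IsRetract R E Y) : IsRetract R M Y := by
  obtain ⟨s₁, r₁, h₁⟩ := h₁
  obtain ⟨s₂, r₂, h₂⟩ := h₂
  refine ⟨s₂ ∘ₗ s₁, r₁ ∘ₗ r₂, ?_⟩
  rw [LinearMap.comp_assoc, ← LinearMap.comp_assoc s₁, h₂, LinearMap.id_comp, h₁]

theorem exists_shortExact_pullback {u : L →ₗ[R] M} {v : M →ₗ[R] N} (hu : Injective u)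
    (hv : Surjective v) (huv : Exact u v) (hN : IsRetract R N Y) :
    ∃ (E : ModuleCat.{0} R) (i : L →ₗ[R] E) (p : E →ₗ[R] Y),
      Injective i ∧ Surjective p ∧ Exact i p ∧ IsRetract R M E := by
  obtain ⟨s, r, hrs⟩ := hN
  let F := ker (v ∘ₗ fst R M Y - r ∘ₗ snd R M Y)
  have hF : ∀ z : M × Y, z ∈ F ↔ v z.1 = r z.2 := fun z => by simp [F, sub_eq_zero]
  refine ⟨ModuleCat.of R F,
    (u.prod 0).codRestrict F fun l => (hF _).mpr (by simp [huv.apply_apply_eq_zero]),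
    snd R M Y ∘ₗ F.subtype, fun a b hab => hu congr(($hab : M × Y).1), fun y => ?_, ?_,
    (LinearMap.id.prod (s ∘ₗ v)).codRestrict F fun m => (hF _).mpr ?_,
    fst R M Y ∘ₗ F.subtype, rfl⟩
  · obtain ⟨m, hm⟩ := hv (r y)
    exact ⟨⟨(m, y), (hF _).mpr hm⟩, rfl⟩
  · rintro ⟨⟨m, y⟩, hz⟩
    refine ⟨fun (hy : y = 0) => ?_, ?_⟩
    · subst hy
      obtain ⟨l, rfl⟩ := (huv m).mp (by simpa using (hF _).mp hz)
      exact ⟨l, rfl⟩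
    · rintro ⟨l, hl⟩
      exact congr(($hl : M × Y).2).symm
  · exact (LinearMap.congr_fun hrs (v m)).symm

theorem exists_shortExact_pushout {i : L →ₗ[R] E} {p : E →ₗ[R] Y} (hi : Injective i)
    (hp : Surjective p) (hip : Exact i p) (hL : IsRetract R L Y') :
    ∃ (E' : ModuleCat.{0} R) (ι : Y' →ₗ[R] E') (π : E' →ₗ[R] Y),
      Injective ι ∧ Surjective π ∧ Exact ι π ∧ IsRetract R E E' := by
  obtain ⟨s, r, hrs⟩ := hL
  let K := range (s.prod (-i))
  have hKp : K ≤ ker (p ∘ₗ snd R Y' E) := by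
    rintro _ ⟨l, rfl⟩
    simp [hip.apply_apply_eq_zero]
  have hKr : K ≤ ker (i ∘ₗ r ∘ₗ fst R Y' E + snd R Y' E) := by
    rintro _ ⟨l, rfl⟩
    simp [← LinearMap.comp_apply r s, hrs]
  refine ⟨ModuleCat.of R ((Y' × E) ⧸ K), K.mkQ ∘ₗ inl R Y' E, K.liftQ _ hKp, ?_,
    fun y => ?_, ?_, K.mkQ ∘ₗ inr R Y' E, K.liftQ _ hKr, by ext e; simp⟩
  · refine (injective_iff_map_eq_zero _).mpr fun a ha => ?_
    obtain ⟨l, hl⟩ := (Submodule.Quotient.mk_eq_zero K).mp ha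
    have hl₀ : l = 0 := hi (by simpa using congr(($hl).2))
    simpa [hl₀] using congr(($hl).1).symm
  · obtain ⟨e, rfl⟩ := hp y
    exact ⟨K.mkQ (0, e), rfl⟩
  · intro z
    obtain ⟨⟨a, e⟩, rfl⟩ := K.mkQ_surjective z
    refine ⟨fun (he : p e = 0) => ?_, ?_⟩
    · obtain ⟨l, rfl⟩ := (hip e).mp he
      refine ⟨a + s l, (Submodule.Quotient.eq K).mpr ⟨l, ?_⟩⟩
      ext <;> simp
    · rintro ⟨a', ha'⟩
      simp [← ha']

theorem exists_shortExact_of_isRetract {YL YN : Type} [AddCommGroup YL] [Module R YL]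
    [AddCommGroup YN] [Module R YN] {u : L →ₗ[R] M} {v : M →ₗ[R] N} (hu : Injective u)
    (hv : Surjective v) (huv : Exact u v) (hL : IsRetract R L YL) (hN : IsRetract R N YN) :
    ∃ (E : ModuleCat.{0} R) (ι : YL →ₗ[R] E) (π : E →ₗ[R] YN),
      Injective ι ∧ Surjective π ∧ Exact ι π ∧ IsRetract R M E := by
  obtain ⟨F, i, p, hi, hp, hip, hMF⟩ := exists_shortExact_pullback hu hv huv hN
  obtain ⟨E, ι, π, hι, hπ, hιπ, hFE⟩ := exists_shortExact_pushout hi hp hip hL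
  exact ⟨E, ι, π, hι, hπ, hιπ, hMF.trans hFE⟩

end Retract

section Approximation

variable {R : Type} [Ring R] {YL E YN PL PN : Type} [AddCommGroup YL] [Module R YL]
  [AddCommGroup E] [Module R E] [AddCommGroup YN] [Module R YN] [AddCommGroup PL] [Module R PL]
  [AddCommGroup PN] [Module R PN] {ι : YL →ₗ[R] E} {π : E →ₗ[R] YN} {φ : E →ₗ[R] PL}
  {fL : YL →ₗ[R] PL} {fN : YN →ₗ[R] PN}

theorem injective_prod_comp_of_exact (hιπ : Exact ι π) (hφ : φ ∘ₗ ι = fL)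
    (hfL : Injective fL) (hfN : Injective fN) : Injective (φ.prod (fN ∘ₗ π)) := by
  refine (injective_iff_map_eq_zero _).mpr fun z hz => ?_
  obtain ⟨y, rfl⟩ := (hιπ z).mp (hfN (congr(($hz).2).trans (map_zero fN).symm))
  have hy : fL y = 0 := by rw [← hφ]; exact congr(($hz).1)
  rw [hfL (hy.trans (map_zero fL).symm), map_zero]

theorem smul_smul_mem_range_prod (hιπ : Exact ι π) (hπ : Surjective π) (hφ : φ ∘ₗ ι = fL)
    {c : R} (hcL : ∀ a, c • a ∈ range fL) (hcN : ∀ b, c • b ∈ range fN) (z : PL × PN) :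
    c • c • z ∈ range (φ.prod (fN ∘ₗ π)) := by
  obtain ⟨y, hy⟩ := hcN z.2
  obtain ⟨x, rfl⟩ := hπ y
  obtain ⟨y', hy'⟩ := hcL (c • z.1 - φ x)
  have hz : c • z = φ.prod (fN ∘ₗ π) x + (c • z.1 - φ x, 0) := by ext <;> simp [hy]
  rw [hz, smul_add]
  refine add_mem (Submodule.smul_mem _ _ ⟨x, rfl⟩) ⟨ι y', ?_⟩
  ext
  · simp [← hy', ← hφ]
  · simp [hιπ.apply_apply_eq_zero]

end Approximation

theorem condition_b_closed_under_extensions_general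
    (k A ιQ : Type) [Field k] [Ring A] [Algebra k A]
    [Fintype ιQ] (e : ιQ → A) (hco : CompOrthIdem e)
    (hIG : IwanagaGorenstein1 Aᵐᵒᵖ) (I : Set ιQ)
    (L N : ModuleCat.{0} Aᵐᵒᵖ)
    -- the sequence for L
    (YL PL XL : ModuleCat.{0} Aᵐᵒᵖ) (fL : YL →ₗ[Aᵐᵒᵖ] PL) (gL : PL →ₗ[Aᵐᵒᵖ] XL)
    (hfL : Function.Injective fL)
    (heL : Function.Exact fL gL) (hYL : IsCM k A YL)
    (hsumL : ∃ (s : L →ₗ[Aᵐᵒᵖ] YL) (r : YL →ₗ[Aᵐᵒᵖ] L), r ∘ₗ s = LinearMap.id)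
    (hPL : Module.Projective Aᵐᵒᵖ PL)
    (hXL : ∀ j ∉ I, ∀ x : XL, (MulOpposite.op (e j)) • x = 0)
    -- the sequence for N
    (YN PN XN : ModuleCat.{0} Aᵐᵒᵖ) (fN : YN →ₗ[Aᵐᵒᵖ] PN) (gN : PN →ₗ[Aᵐᵒᵖ] XN)
    (hfN : Function.Injective fN)
    (heN : Function.Exact fN gN) (hYN : IsCM k A YN)
    (hsumN : ∃ (s : N →ₗ[Aᵐᵒᵖ] YN) (r : YN →ₗ[Aᵐᵒᵖ] N), r ∘ₗ s = LinearMap.id)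
    (hPN : Module.Projective Aᵐᵒᵖ PN)
    (hXN : ∀ j ∉ I, ∀ x : XN, (MulOpposite.op (e j)) • x = 0)
    -- an extension of N by L
    (M : ModuleCat.{0} Aᵐᵒᵖ) (u : L →ₗ[Aᵐᵒᵖ] M) (v : M →ₗ[Aᵐᵒᵖ] N)
    (hu : Function.Injective u) (hv : Function.Surjective v) (huv : Function.Exact u v) :
    ∃ (YM XM : ModuleCat.{0} Aᵐᵒᵖ)
      (f : YM →ₗ[Aᵐᵒᵖ] (↥PL × ↥PN)) (g : (↥PL × ↥PN) →ₗ[Aᵐᵒᵖ] XM),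
      Function.Injective f ∧ Function.Surjective g ∧ Function.Exact f g ∧
      IsCM k A YM ∧
      (∃ (s : M →ₗ[Aᵐᵒᵖ] YM) (r : YM →ₗ[Aᵐᵒᵖ] M), r ∘ₗ s = LinearMap.id) ∧
      (∀ j ∉ I, ∀ x : XM, (MulOpposite.op (e j)) • x = 0) := by
  obtain ⟨E, ι, π, hι, hπ, hιπ, hME⟩ := exists_shortExact_of_isRetract hu hv huv hsumL hsumN
  have hE : IsCM k A E := isCM_iff_extOneVanishes.mpr <|
    (isCM_iff_extOneVanishes.mp hYL).of_exact hι hπ hιπ (isCM_iff_extOneVanishes.mp hYN)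
  obtain ⟨φ, hφ⟩ := extOneVanishes_of_injDimLE1 (hIG.1 PL hPL) hfN YL E ι π hι hπ hιπ fL
  let f := φ.prod (fN ∘ₗ π)
  refine ⟨E, ModuleCat.of _ (_ ⧸ range f), f, (range f).mkQ,
    injective_prod_comp_of_exact hιπ hφ hfL hfN, (range f).mkQ_surjective,
    exact_map_mkQ_range f, hE, hME, fun j hj x => ?_⟩
  obtain ⟨z, rfl⟩ := (range f).mkQ_surjective x
  have hc : IsIdempotentElem (MulOpposite.op (e j)) := congrArg MulOpposite.op (hco.2.1 j)
  rw [← hc.eq, mul_smul, ← map_smul, ← map_smul, Submodule.mkQ_apply,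
    Submodule.Quotient.mk_eq_zero]
  exact smul_smul_mem_range_prod hιπ hπ hφ
    (fun a => (heL _).mp (by rw [map_smul, hXL j hj]))
    (fun b => (heN _).mp (by rw [map_smul, hXN j hj])) z

/-- (Extension-closure of condition (b) of Lemma `genrad`.) Over an
Iwanaga-Gorenstein algebra of Gorenstein dimension at most 1, suppose the Cohen-Macaulay
modules `L` and `N` admit short exact sequences `0 → Y_L → P_L → X_L → 0` and
`0 → Y_N → P_N → X_N → 0` with `Y_L, Y_N` Cohen-Macaulay containing `L`, `N` as direct
summands, `P_L, P_N` projective, and `X_L, X_N` supported only at vertices of `I`. Then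
every extension `M` of `N` by `L` admits a short exact sequence
`0 → Y_M → P_L ⊕ P_N → X_M → 0` of the same form. -/
theorem condition_b_closed_under_extensions
    (k A ιQ : Type) [Field k] [IsAlgClosed k] [Ring A] [Algebra k A] [FiniteDimensional k A]
    [Fintype ιQ] (e : ιQ → A) (hco : CompOrthIdem e)
    (hprim : ∀ j, IsPrimitiveIdempotent (e j))
    (hIG : IwanagaGorenstein1 Aᵐᵒᵖ) (I : Set ιQ)
    (L N : ModuleCat.{0} Aᵐᵒᵖ) (hL : IsCM k A L) (hN : IsCM k A N)
    -- the sequence for L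
    (YL PL XL : ModuleCat.{0} Aᵐᵒᵖ) (fL : YL →ₗ[Aᵐᵒᵖ] PL) (gL : PL →ₗ[Aᵐᵒᵖ] XL)
    (hfL : Function.Injective fL) (hgL : Function.Surjective gL)
    (heL : Function.Exact fL gL) (hYL : IsCM k A YL)
    (hsumL : ∃ (s : L →ₗ[Aᵐᵒᵖ] YL) (r : YL →ₗ[Aᵐᵒᵖ] L), r ∘ₗ s = LinearMap.id)
    (hPL : Module.Projective Aᵐᵒᵖ PL)
    (hXL : ∀ j ∉ I, ∀ x : XL, (MulOpposite.op (e j)) • x = 0)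
    -- the sequence for N
    (YN PN XN : ModuleCat.{0} Aᵐᵒᵖ) (fN : YN →ₗ[Aᵐᵒᵖ] PN) (gN : PN →ₗ[Aᵐᵒᵖ] XN)
    (hfN : Function.Injective fN) (hgN : Function.Surjective gN)
    (heN : Function.Exact fN gN) (hYN : IsCM k A YN)
    (hsumN : ∃ (s : N →ₗ[Aᵐᵒᵖ] YN) (r : YN →ₗ[Aᵐᵒᵖ] N), r ∘ₗ s = LinearMap.id)
    (hPN : Module.Projective Aᵐᵒᵖ PN)
    (hXN : ∀ j ∉ I, ∀ x : XN, (MulOpposite.op (e j)) • x = 0)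
    -- an extension of N by L
    (M : ModuleCat.{0} Aᵐᵒᵖ) (u : L →ₗ[Aᵐᵒᵖ] M) (v : M →ₗ[Aᵐᵒᵖ] N)
    (hu : Function.Injective u) (hv : Function.Surjective v) (huv : Function.Exact u v) :
    ∃ (YM XM : ModuleCat.{0} Aᵐᵒᵖ)
      (f : YM →ₗ[Aᵐᵒᵖ] (↥PL × ↥PN)) (g : (↥PL × ↥PN) →ₗ[Aᵐᵒᵖ] XM),
      Function.Injective f ∧ Function.Surjective g ∧ Function.Exact f g ∧
      IsCM k A YM ∧
      (∃ (s : M →ₗ[Aᵐᵒᵖ] YM) (r : YM →ₗ[Aᵐᵒᵖ] M), r ∘ₗ s = LinearMap.id) ∧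
      (∀ j ∉ I, ∀ x : XM, (MulOpposite.op (e j)) • x = 0) :=
  condition_b_closed_under_extensions_general k A ιQ e hco hIG I L N YL PL XL fL gL hfL heL hYL
    hsumL hPL hXL YN PN XN fN gN hfN heN hYN hsumN hPN hXN M u v hu hv huv
end
end

section
/- Let A be an Iwanaga-Gorenstein algebra of Gorenstein dimension at most 1, let M be a Cohen-Macaulay A-module, and let S(i) be a direct summand of the top of M. Then the submodule M_i of M fitting in a short exact sequence 0 → M_i → M → S(i) → 0 is again Cohen-Macaulay, and there is a short exact sequence 0 → rad P(i) → P(i) ⊕ M_i → M → 0. -/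
noncomputable section

open CategoryTheory Opposite DirectSum MulOpposite

/-!
Since `A` is projective it has an injective coresolution `0 → A → I₀ → I₁ → 0`, and dimension
shifting gives `Ext¹(X, A) = 0` iff every map `X → I₁` lifts to `I₀`. This lifting property
passes from `M` to any submodule `K ⊆ M`, since a map `K → I₁` first extends to `M` by injectivity
of `I₁`. The exact sequence is the pullback of `M → S(i)` and `P(i) → S(i)`: as `P(i) = eᵢA` is
projective, `P(i) → S(i)` lifts to `φ : P(i) → M`, which identifies the pullback with
`P(i) × M_i`.
-/

open LinearMap

universe u

section LinearAlgebra

variable {R M N P Q : Type*} [Ring R] [AddCommGroup M] [AddCommGroup N] [AddCommGroup P]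
  [AddCommGroup Q] [Module R M] [Module R N] [Module R P] [Module R Q]

theorem LinearMap.exists_comp_eq_of_surjective_of_ker_le_s6 {π : M →ₗ[R] N}
    (hπ : Function.Surjective π) {g : M →ₗ[R] P} (hg : ker π ≤ ker g) :
    ∃ h : N →ₗ[R] P, h ∘ₗ π = g :=
  ⟨(ker π).liftQ g hg ∘ₗ (π.quotKerEquivOfSurjective hπ).symm.toLinearMap, by
    ext x
    simp⟩

theorem Function.Exact.exists_comp_eq_of_injective {a : N →ₗ[R] P} {b : P →ₗ[R] Q}
    (hab : Function.Exact a b) (ha : Function.Injective a) {δ : M →ₗ[R] P}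
    (hδ : b ∘ₗ δ = 0) : ∃ ψ : M →ₗ[R] N, a ∘ₗ ψ = δ := by
  have hmem : ∀ m, δ m ∈ range a := fun m => (hab (δ m)).1 (LinearMap.congr_fun hδ m)
  refine ⟨(LinearEquiv.ofInjective a ha).symm.toLinearMap ∘ₗ δ.codRestrict (range a) hmem, ?_⟩
  ext m
  exact congrArg Subtype.val ((LinearEquiv.ofInjective a ha).apply_symm_apply ⟨δ m, hmem m⟩)

variable {P₂ P₁ P₀ X : Type*} [AddCommGroup P₂] [AddCommGroup P₁] [AddCommGroup P₀]
  [AddCommGroup X] [Module R P₂] [Module R P₁] [Module R P₀] [Module R X]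

/-- A `1`-cocycle `P₁ → N` is the same as a map from the syzygy `ker u` to `N`, and it is a
coboundary iff that map extends to `P₀`. -/
theorem forall_cocycle_exists_comp_eq_iff_surjective_restrict {d₂ : P₂ →ₗ[R] P₁}
    {d₁ : P₁ →ₗ[R] P₀} {u : P₀ →ₗ[R] X} (h₂₁ : Function.Exact d₂ d₁) (h₁₀ : Function.Exact d₁ u) :
    (∀ φ : P₁ →ₗ[R] N, φ ∘ₗ d₂ = 0 → ∃ ψ : P₀ →ₗ[R] N, ψ ∘ₗ d₁ = φ) ↔
      Function.Surjective fun ψ : P₀ →ₗ[R] N => ψ ∘ₗ (ker u).subtype := by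
  set c : P₁ →ₗ[R] ker u := d₁.codRestrict (ker u) h₁₀.apply_apply_eq_zero
  have hc : Function.Surjective c := by
    rintro ⟨z, hz⟩
    obtain ⟨y, rfl⟩ := (h₁₀ z).1 hz
    exact ⟨y, rfl⟩
  have hd₁ : (ker u).subtype ∘ₗ c = d₁ := subtype_comp_codRestrict _ _ _
  constructor
  · intro H φ₀
    obtain ⟨ψ, hψ⟩ := H (φ₀ ∘ₗ c) (by
      ext t
      simp [show c (d₂ t) = 0 from Subtype.ext (h₂₁.apply_apply_eq_zero t)])
    refine ⟨ψ, (cancel_right hc).1 ?_⟩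
    rwa [comp_assoc, hd₁]
  · intro H φ hφ
    have hker : ker c ≤ ker φ := by
      rw [show ker c = ker d₁ from ker_codRestrict _ _ _, h₂₁.linearMap_ker_eq]
      rintro _ ⟨t, rfl⟩
      exact LinearMap.congr_fun hφ t
    obtain ⟨φ₀, rfl⟩ := exists_comp_eq_of_surjective_of_ker_le_s6 hc hker
    obtain ⟨ψ, rfl⟩ := H φ₀
    exact ⟨ψ, by rw [comp_assoc, hd₁]⟩

/-- The sequence `0 → L → P × ker p → M → 0` with maps `r ↦ (r, φ r)` and `(x, m) ↦ φ x - m`: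
the lift `φ` identifies the pullback of `p` and `L.mkQ` with `P × ker p`. -/
theorem exists_exact_prod_ker_of_comp_eq_mkQ (L : Submodule R P) {φ : P →ₗ[R] M}
    {p : M →ₗ[R] P ⧸ L} (hφ : p ∘ₗ φ = L.mkQ) :
    ∃ (f : L →ₗ[R] P × ker p) (g : P × ker p →ₗ[R] M),
      Function.Injective f ∧ Function.Surjective g ∧ Function.Exact f g := by
  have hpφ (x : P) : p (φ x) = L.mkQ x := LinearMap.congr_fun hφ x
  have hmem (r : L) : φ r ∈ ker p := by
    rw [mem_ker, hpφ, Submodule.mkQ_apply, Submodule.Quotient.mk_eq_zero]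
    exact r.2
  refine ⟨L.subtype.prod ((φ ∘ₗ L.subtype).codRestrict (ker p) hmem),
    φ.coprod (-(ker p).subtype), fun r r' h => Subtype.ext (congrArg Prod.fst h), ?_, ?_⟩
  · intro m
    obtain ⟨x, hx⟩ := L.mkQ_surjective (p m)
    refine ⟨(x, ⟨φ x - m, by rw [mem_ker, map_sub, hpφ, hx, sub_self]⟩), ?_⟩
    simp
  · rintro ⟨x, m⟩
    simp only [coprod_apply, LinearMap.neg_apply, Submodule.subtype_apply, ← sub_eq_add_neg,
      sub_eq_zero]
    constructor
    · intro h
      have hx : x ∈ L := by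
        rw [← Submodule.Quotient.mk_eq_zero, ← Submodule.mkQ_apply, ← hpφ, h]
        exact m.2
      exact ⟨⟨x, hx⟩, Prod.ext rfl (Subtype.ext h)⟩
    · rintro ⟨r, hr⟩
      obtain ⟨rfl, rfl⟩ := Prod.ext_iff.1 hr
      rfl

/-- Both sides express `Ext¹(X, N) = 0`: the left one through the projective presentation `π`,
the right one by dimension shifting along `0 → N → I₀ → I₁ → 0`. -/
theorem surjective_restrict_iff_surjective_comp {P₀ I₀ : Type u} [AddCommGroup P₀]
    [Module R P₀] [Module.Projective R P₀] [AddCommGroup I₀] [Module R I₀]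
    [Module.Injective R I₀] {π : P₀ →ₗ[R] X} (hπ : Function.Surjective π) {a : N →ₗ[R] I₀}
    {b : I₀ →ₗ[R] Q} (ha : Function.Injective a) (hb : Function.Surjective b)
    (hab : Function.Exact a b) :
    (Function.Surjective fun ψ : P₀ →ₗ[R] N => ψ ∘ₗ (ker π).subtype) ↔
      Function.Surjective fun θ : X →ₗ[R] I₀ => b ∘ₗ θ := by
  constructor
  · intro H θ
    obtain ⟨ρ, hρ⟩ := Module.projective_lifting_property b (θ ∘ₗ π) hb
    obtain ⟨σ, hσ⟩ := hab.exists_comp_eq_of_injective ha (δ := ρ ∘ₗ (ker π).subtype) (by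
      ext x
      simpa using LinearMap.congr_fun hρ x)
    obtain ⟨σ', rfl⟩ := H σ
    obtain ⟨θ', hθ'⟩ := exists_comp_eq_of_surjective_of_ker_le_s6 hπ (g := ρ - a ∘ₗ σ') fun x hx => by
      simpa [sub_eq_zero] using (LinearMap.congr_fun hσ ⟨x, hx⟩).symm
    refine ⟨θ', (cancel_right hπ).1 ?_⟩
    dsimp only
    rw [comp_assoc, hθ', comp_sub, hρ, ← comp_assoc, hab.linearMap_comp_eq_zero, zero_comp,
      sub_zero]
  · intro H φ
    obtain ⟨ψ₀, hψ₀⟩ := Module.Injective.out (ker π).subtype Subtype.val_injective (a ∘ₗ φ)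
    replace hψ₀ : ∀ x : ker π, ψ₀ x = a (φ x) := hψ₀
    obtain ⟨θ, hθ⟩ := exists_comp_eq_of_surjective_of_ker_le_s6 hπ (g := b ∘ₗ ψ₀) fun x hx => by
      simpa [hψ₀ ⟨x, hx⟩] using hab.apply_apply_eq_zero (φ ⟨x, hx⟩)
    obtain ⟨θ', rfl⟩ := H θ
    obtain ⟨ψ, hψ⟩ := hab.exists_comp_eq_of_injective ha (δ := ψ₀ - θ' ∘ₗ π) (by
      rw [comp_sub, ← hθ, comp_assoc, sub_self])
    refine ⟨ψ, ext fun x => ha ?_⟩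
    simpa [hψ₀ x] using LinearMap.congr_fun hψ x

end LinearAlgebra

section Ext

variable (k : Type) [Field k] {A : Type} [Ring A] [Algebra k A]

theorem subsingleton_rext1_iff_surjective_restrict {X : ModuleCat.{0} Aᵐᵒᵖ}
    (N : ModuleCat.{0} Aᵐᵒᵖ) (P : ProjectiveResolution X) :
    Subsingleton (rext1 k A X N) ↔
      Function.Surjective fun ψ : P.complex.X 0 →ₗ[Aᵐᵒᵖ] N => ψ ∘ₗ (ker (P.π.f 0).hom).subtype := by
  rw [← ModuleCat.isZero_iff_subsingleton, (P.isoExt 1 N).isZero_iff,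
    ← HomologicalComplex.exactAt_iff_isZero_homology,
    HomologicalComplex.exactAt_iff' _ 0 1 2 (by simp) (by simp),
    ShortComplex.moduleCat_exact_iff,
    ← forall_cocycle_exists_comp_eq_iff_surjective_restrict
      (exact_iff.2 (P.exact_succ 0).moduleCat_range_eq_ker.symm)
      (exact_iff.2 P.exact₀.moduleCat_range_eq_ker.symm)]
  constructor
  · intro H φ hφ
    obtain ⟨ψ, hψ⟩ := H (ModuleCat.ofHom φ) (ModuleCat.hom_ext hφ)
    exact ⟨ψ.hom, congrArg ModuleCat.Hom.hom hψ⟩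
  · intro H φ hφ
    obtain ⟨ψ, hψ⟩ := H φ.hom (congrArg ModuleCat.Hom.hom hφ)
    exact ⟨ModuleCat.ofHom ψ, ModuleCat.hom_ext hψ⟩

theorem subsingleton_rext1_iff_surjective_comp {X N : ModuleCat.{0} Aᵐᵒᵖ} {I₀ I₁ : Type}
    [AddCommGroup I₀] [Module Aᵐᵒᵖ I₀] [Module.Injective Aᵐᵒᵖ I₀] [AddCommGroup I₁]
    [Module Aᵐᵒᵖ I₁] {a : N →ₗ[Aᵐᵒᵖ] I₀} {b : I₀ →ₗ[Aᵐᵒᵖ] I₁} (ha : Function.Injective a)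
    (hb : Function.Surjective b) (hab : Function.Exact a b) :
    Subsingleton (rext1 k A X N) ↔ Function.Surjective fun θ : X →ₗ[Aᵐᵒᵖ] I₀ => b ∘ₗ θ := by
  let P := projectiveResolution X
  have : Module.Projective Aᵐᵒᵖ (P.complex.X 0) :=
    (IsProjective.iff_projective _).2 (P.projective 0)
  rw [subsingleton_rext1_iff_surjective_restrict k N P]
  exact surjective_restrict_iff_surjective_comp
    ((ModuleCat.epi_iff_surjective _).1 inferInstance) ha hb hab

/-- A map `K → I₁` extends to `M` because `I₁` is injective, and then lifts to `I₀` because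
`Ext¹(M, N) = 0`. -/
theorem subsingleton_rext1_of_injective {K M N : ModuleCat.{0} Aᵐᵒᵖ}
    (hN : InjDimLE1 Aᵐᵒᵖ N) {ι : K →ₗ[Aᵐᵒᵖ] M} (hι : Function.Injective ι)
    (hM : Subsingleton (rext1 k A M N)) : Subsingleton (rext1 k A K N) := by
  obtain ⟨I₀, I₁, a, b, hI₀, hI₁, ha, hb, hab⟩ := hN
  rw [subsingleton_rext1_iff_surjective_comp k ha hb hab] at hM ⊢
  intro θ
  obtain ⟨Θ, hΘ⟩ := hI₁.out ι hι θ
  obtain ⟨Θ', hΘ'⟩ := hM Θ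
  exact ⟨Θ' ∘ₗ ι, ext fun x => by simp [← hΘ, ← hΘ']⟩

end Ext

instance MulOpposite.projective_self {A : Type*} [Ring A] : Module.Projective Aᵐᵒᵖ A :=
  .of_equiv' (opLinearEquiv Aᵐᵒᵖ).symm

theorem projective_pIdeal {A : Type} [Ring A] {e : A} (he : IsIdempotentElem e) :
    Module.Projective Aᵐᵒᵖ (pIdeal e) := by
  have mul_mem : ∀ a : A, e * a ∈ pIdeal e := fun a =>
    Submodule.mem_span_singleton.2 ⟨op a, rfl⟩
  let s : A →ₗ[Aᵐᵒᵖ] pIdeal e :=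
    { toFun a := ⟨e * a, mul_mem a⟩
      map_add' x y := Subtype.ext (mul_add e x y)
      map_smul' c x := Subtype.ext (mul_assoc e x c.unop).symm }
  refine .of_split (pIdeal e).subtype s (ext fun ⟨x, hx⟩ => Subtype.ext ?_)
  obtain ⟨c, rfl⟩ := Submodule.mem_span_singleton.1 hx
  exact (mul_assoc e e c.unop).symm.trans (congrArg (· * c.unop) he)

theorem remove_simple_from_top_general
    (k A ιQ : Type) [Field k] [Ring A] [Algebra k A]
    (e : ιQ → A)
    (hprim : ∀ j, IsPrimitiveIdempotent (e j))
    (hIG : IwanagaGorenstein1 Aᵐᵒᵖ) (i : ιQ)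
    (M : ModuleCat.{0} Aᵐᵒᵖ) (hM : IsCM k A M)
    (p : M →ₗ[Aᵐᵒᵖ] (↥(pIdeal (e i)) ⧸ radical Aᵐᵒᵖ ↥(pIdeal (e i))))
    (hp : Function.Surjective p) :
    IsCM k A (ModuleCat.of Aᵐᵒᵖ ↥(LinearMap.ker p)) ∧
    ∃ (f : ↥(radical Aᵐᵒᵖ ↥(pIdeal (e i))) →ₗ[Aᵐᵒᵖ] (↥(pIdeal (e i)) × ↥(LinearMap.ker p)))
      (g : (↥(pIdeal (e i)) × ↥(LinearMap.ker p)) →ₗ[Aᵐᵒᵖ] M),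
      Function.Injective f ∧ Function.Surjective g ∧ Function.Exact f g := by
  have hA : InjDimLE1 Aᵐᵒᵖ (ModuleCat.of Aᵐᵒᵖ A) := hIG.1 _ MulOpposite.projective_self
  have := projective_pIdeal (hprim i).1
  obtain ⟨φ, hφ⟩ := Module.projective_lifting_property p (radical Aᵐᵒᵖ _).mkQ hp
  exact ⟨subsingleton_rext1_of_injective k hA (ker p).injective_subtype hM,
    exists_exact_prod_ker_of_comp_eq_mkQ _ hφ⟩

/-- Over an Iwanaga-Gorenstein algebra of Gorenstein dimension at most 1,
let `M` be a Cohen-Macaulay module and let `S(i)` be a direct summand of `top M`,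
witnessed by a surjection `p : M → S(i) = P(i)/rad P(i)`. Then the submodule
`M_i = ker p`, which fits in the short exact sequence `0 → M_i → M → S(i) → 0`, is again
Cohen-Macaulay, and there is a short exact sequence
`0 → rad P(i) → P(i) ⊕ M_i → M → 0`. -/
theorem remove_simple_from_top
    (k A ιQ : Type) [Field k] [IsAlgClosed k] [Ring A] [Algebra k A] [FiniteDimensional k A]
    [Fintype ιQ] (e : ιQ → A) (hco : CompOrthIdem e)
    (hprim : ∀ j, IsPrimitiveIdempotent (e j))
    (hIG : IwanagaGorenstein1 Aᵐᵒᵖ) (i : ιQ)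
    (M : ModuleCat.{0} Aᵐᵒᵖ) [Module.Finite Aᵐᵒᵖ M] (hM : IsCM k A M)
    (p : M →ₗ[Aᵐᵒᵖ] (↥(pIdeal (e i)) ⧸ radical Aᵐᵒᵖ ↥(pIdeal (e i))))
    (hp : Function.Surjective p) :
    IsCM k A (ModuleCat.of Aᵐᵒᵖ ↥(LinearMap.ker p)) ∧
    ∃ (f : ↥(radical Aᵐᵒᵖ ↥(pIdeal (e i))) →ₗ[Aᵐᵒᵖ] (↥(pIdeal (e i)) × ↥(LinearMap.ker p)))
      (g : (↥(pIdeal (e i)) × ↥(LinearMap.ker p)) →ₗ[Aᵐᵒᵖ] M),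
      Function.Injective f ∧ Function.Surjective g ∧ Function.Exact f g :=
  remove_simple_from_top_general k A ιQ e hprim hIG i M hM p hp
end
end

section
/- Let A be a 2-Calabi-Yau tilted algebra, J = A e_i A, X a module in the perpendicular category J^⊥, and M a module over B = A/J. Then every A-module homomorphism g : X → M factors through the canonical quotient map X → F(X), where F(X) is the cokernel of an add-J approximation of X. In particular F(X) is the largest quotient of X lying in mod B. -/
noncomputable section

open CategoryTheory Opposite DirectSum MulOpposite

/-- A witness that `B` is a 2-Calabi-Yau tilted algebra: a Hom-finite, idempotent
complete (hence Krull-Schmidt), `k`-linear triangulated 2-Calabi-Yau category `C`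
together with a cluster-tilting object `T` such that `B ≅ End_C T`. -/
structure CYTiltedWitness (k : Type) [Field k] (B : Type) [Ring B] [Algebra k B] :
    Type 1 where
  C : Type
  [cat : Category.{0} C]
  [pre : Preadditive C]
  [lin : Linear k C]
  [shift : HasShift C ℤ]
  [zero : Limits.HasZeroObject C]
  [shiftAdd : ∀ n : ℤ, (shiftFunctor C n).Additive]
  [tri : Pretriangulated C]
  [biprod : Limits.HasFiniteBiproducts C]
  [idem : IsIdempotentComplete C]
  homFinite : ∀ X Y : C, FiniteDimensional k (X ⟶ Y)
  /-- the 2-Calabi-Yau property: a Serre duality `D Hom(X,Y) ≅ Hom(Y, X⟦2⟧)` -/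
  serre : ∀ X Y : C, Nonempty ((X ⟶ Y) ≃ₗ[k] Module.Dual k (Y ⟶ X⟦(2:ℤ)⟧))
  T : C
  /-- `T` is cluster-tilting: `add T = {X | Ext¹(T, X) = 0}` -/
  clusterTilting : ∀ X : C, (∀ f : T ⟶ X⟦(1:ℤ)⟧, f = 0) ↔
    ∃ (n : ℕ) (s : X ⟶ ⨁ (fun _ : Fin n => T)) (r : (⨁ (fun _ : Fin n => T)) ⟶ X),
      s ≫ r = 𝟙 X
  algIso : Nonempty (B ≃ₐ[k] End T)

/-- `B` is a 2-Calabi-Yau tilted algebra. -/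
def IsCYTilted (k : Type) [Field k] (B : Type) [Ring B] [Algebra k B] : Prop :=
  Nonempty (CYTiltedWitness k B)

/-- `M` is a module over `B = A/AeA`: the ideal `J = AeA` acts trivially. -/
def JTriv {A : Type} [Ring A] (e : A) (M : Type) [AddCommGroup M]
    [Module Aᵐᵒᵖ M] : Prop :=
  ∀ a ∈ genIdeal e, ∀ m : M, (MulOpposite.op a) • m = 0

/-- `N` belongs to `add J`, i.e. is a direct summand of a finite direct sum of
copies of `J = AeA`. -/
def InAddJ {A : Type} [Ring A] (e : A) (N : ModuleCat.{0} Aᵐᵒᵖ) : Prop :=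
  ∃ (n : ℕ) (s : N →ₗ[Aᵐᵒᵖ] (Fin n → ↥(genIdeal e)))
    (r : (Fin n → ↥(genIdeal e)) →ₗ[Aᵐᵒᵖ] N), r ∘ₗ s = LinearMap.id

/-- `f : J_X → X` is an `add J`-approximation: `J_X ∈ add J` and every map from a
module of `add J` to `X` factors through `f`. -/
def IsAddJApprox {A : Type} [Ring A] (e : A) (JX X : ModuleCat.{0} Aᵐᵒᵖ)
    (f : JX →ₗ[Aᵐᵒᵖ] X) : Prop :=
  InAddJ e JX ∧ ∀ (Z : ModuleCat.{0} Aᵐᵒᵖ), InAddJ e Z →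
    ∀ g : Z →ₗ[Aᵐᵒᵖ] X, ∃ h : Z →ₗ[Aᵐᵒᵖ] JX, f ∘ₗ h = g


section Aux

variable {A : Type} [Ring A]

lemma e_mem_genIdeal (e : A) : e ∈ genIdeal e :=
  Submodule.subset_span ⟨1, by simp⟩

/-- Any linear map from `J = AeA` to a `J`-trivial module is zero. -/
lemma hom_from_J_eq_zero {e : A} (he : IsIdempotentElem e)
    {M : Type} [AddCommGroup M] [Module Aᵐᵒᵖ M] (hM : JTriv e M)
    (φ : ↥(genIdeal e) →ₗ[Aᵐᵒᵖ] M) : φ = 0 := by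
  ext x
  obtain ⟨x, hx⟩ := x
  simp only [LinearMap.zero_apply]
  induction hx using Submodule.span_induction with
  | mem a ha =>
      obtain ⟨b, rfl⟩ := ha
      have key : (MulOpposite.op e) • (⟨b * e, Submodule.subset_span ⟨b, rfl⟩⟩ :
          ↥(genIdeal e)) = ⟨b * e, Submodule.subset_span ⟨b, rfl⟩⟩ := by
        apply Subtype.ext
        show (b * e) * e = b * e
        rw [mul_assoc, he]
      calc φ ⟨b * e, Submodule.subset_span ⟨b, rfl⟩⟩
          = φ ((MulOpposite.op e) • ⟨b * e, Submodule.subset_span ⟨b, rfl⟩⟩) := by rw [key]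
        _ = (MulOpposite.op e) • φ ⟨b * e, Submodule.subset_span ⟨b, rfl⟩⟩ := map_smul ..
        _ = 0 := hM e (e_mem_genIdeal e) _
  | zero => exact map_zero φ
  | add a b ha hb iha ihb =>
      have : φ ⟨a + b, Submodule.add_mem _ ha hb⟩ = φ ⟨a, ha⟩ + φ ⟨b, hb⟩ := by
        rw [← map_add]; rfl
      rw [this, iha, ihb, add_zero]
  | smul c a ha iha =>
      have : φ ⟨c • a, Submodule.smul_mem _ c ha⟩ = c • φ ⟨a, ha⟩ := by
        rw [← map_smul]; rfl
      rw [this, iha, smul_zero]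

/-- Any linear map from a module in `add J` to a `J`-trivial module is zero. -/
lemma hom_from_addJ_eq_zero {e : A} (he : IsIdempotentElem e)
    {M : Type} [AddCommGroup M] [Module Aᵐᵒᵖ M] (hM : JTriv e M)
    {Z : ModuleCat.{0} Aᵐᵒᵖ} (hZ : InAddJ e Z)
    (φ : Z →ₗ[Aᵐᵒᵖ] M) : φ = 0 := by
  obtain ⟨n, s, r, hrs⟩ := hZ
  have hπ : φ ∘ₗ r = 0 := by
    refine LinearMap.ext fun v => ?_
    have hv : v = ∑ i, Pi.single i (v i) := (Finset.univ_sum_single v).symm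
    rw [LinearMap.comp_apply, hv, map_sum, map_sum]
    refine Finset.sum_eq_zero fun i _ => ?_
    have := hom_from_J_eq_zero he hM ((φ ∘ₗ r) ∘ₗ LinearMap.single Aᵐᵒᵖ (fun _ : Fin n => ↥(genIdeal e)) i)
    calc φ (r (Pi.single i (v i)))
        = ((φ ∘ₗ r) ∘ₗ LinearMap.single Aᵐᵒᵖ (fun _ : Fin n => ↥(genIdeal e)) i) (v i) := rfl
      _ = 0 := by rw [this]; rfl
  calc φ = φ ∘ₗ (r ∘ₗ s) := by rw [hrs]; rfl
    _ = (φ ∘ₗ r) ∘ₗ s := rfl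
    _ = 0 := by rw [hπ]; simp

/-- `J` itself is in `add J`. -/
lemma J_inAddJ (e : A) : InAddJ e (ModuleCat.of Aᵐᵒᵖ ↥(genIdeal e)) := by
  refine ⟨1, LinearMap.pi (fun _ => LinearMap.id), LinearMap.proj 0, ?_⟩
  rfl

/-- For `m : X`, the map `a ↦ op a • m`, `A → X`, is right `A`-linear. -/
def smulMap {X : Type} [AddCommGroup X] [Module Aᵐᵒᵖ X] (m : X) : A →ₗ[Aᵐᵒᵖ] X where
  toFun a := (MulOpposite.op a) • m
  map_add' a b := by rw [← add_smul]; rfl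
  map_smul' c a := by
    show (MulOpposite.op (a * c.unop)) • m = c • (MulOpposite.op a • m)
    rw [MulOpposite.op_mul, MulOpposite.op_unop, mul_smul]

end Aux

/-- Let `A` be a 2-Calabi-Yau tilted algebra, `J = A e A`, `X ∈ J^⊥`,
and `M` a module over `B = A/J`. Then every `A`-module homomorphism `g : X → M` factors
through the canonical quotient map `X → F(X)`, where `F(X)` is the cokernel of an
`add J`-approximation of `X`. In particular `F(X)` is a `B`-module, hence the largest
quotient of `X` lying in `mod B`. -/
theorem hom_factors_through_FX
    (k A : Type) [Field k] [IsAlgClosed k] [Ring A] [Algebra k A] [FiniteDimensional k A]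
    (hA : IsCYTilted k A) (e : A) (he : IsPrimitiveIdempotent e)
    (X : ModuleCat.{0} Aᵐᵒᵖ) [Module.Finite Aᵐᵒᵖ X] (hX : IsCM k A X)
    (h1 : Subsingleton (rext1 k A (ModuleCat.of Aᵐᵒᵖ ↥(genIdeal e)) X))
    (h2 : Subsingleton (rext1 k A X (ModuleCat.of Aᵐᵒᵖ ↥(genIdeal e))))
    (JX : ModuleCat.{0} Aᵐᵒᵖ) (fX : JX →ₗ[Aᵐᵒᵖ] X) (hfX : IsAddJApprox e JX X fX)
    (M : Type) [AddCommGroup M] [Module Aᵐᵒᵖ M] (hM : JTriv e M)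
    (g : X →ₗ[Aᵐᵒᵖ] M) :
    JTriv e (X ⧸ LinearMap.range fX) ∧
    ∃ h : (X ⧸ LinearMap.range fX) →ₗ[Aᵐᵒᵖ] M,
      h ∘ₗ (LinearMap.range fX).mkQ = g := by
  constructor
  · -- `F(X)` is a `B`-module
    intro a ha m
    obtain ⟨m, rfl⟩ := Submodule.mkQ_surjective _ m
    have hop : (MulOpposite.op a) • (Submodule.mkQ (LinearMap.range fX) m)
        = Submodule.mkQ (LinearMap.range fX) ((MulOpposite.op a) • m) := (map_smul _ _ _).symm
    rw [hop, Submodule.mkQ_apply, Submodule.Quotient.mk_eq_zero]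
    -- use the approximation property on the map `j ↦ op j • m : J → X`
    set ψ : ↥(genIdeal e) →ₗ[Aᵐᵒᵖ] X := (smulMap m) ∘ₗ (genIdeal e).subtype with hψ
    obtain ⟨h, hh⟩ := hfX.2 (ModuleCat.of Aᵐᵒᵖ ↥(genIdeal e)) (J_inAddJ e) ψ
    have : (MulOpposite.op a) • m = fX (h ⟨a, ha⟩) := by
      have := congrArg (fun F => F ⟨a, ha⟩) hh
      exact this.symm
    exact this ▸ ⟨h ⟨a, ha⟩, rfl⟩
  · -- factorization
    have hgf : g ∘ₗ fX = 0 := hom_from_addJ_eq_zero he.1 hM hfX.1 (g ∘ₗ fX)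
    have hle : LinearMap.range fX ≤ LinearMap.ker g := by
      rintro x ⟨y, rfl⟩
      exact congrArg (fun F => F y) hgf
    exact ⟨(LinearMap.range fX).liftQ g hle, by ext x; rfl⟩
end
end
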